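/- arXiv:1911.06575 — 2 statements merged into one kernel-verified Lean document; each statement's English description precedes it below -/
import Mathlib

section
/- For n ≥ 2 there is a chain of Lie subalgebras 𝔰𝔬(2n−1,ℂ) ⊂ 𝔰𝔬(2n,ℂ) ⊂ 𝔰𝔬(2n+1,ℂ) in which both 𝔰𝔬(2n−1,ℂ) (type B_{n−1}) and 𝔰𝔬(2n,ℂ) (type D_n) are regular subalgebras of 𝔰𝔬(2n+1,ℂ) (type B_n), but they are not normalized by one and the same Cartan subalgebra of 𝔰𝔬(2n+1,ℂ). -/
/-!
Realise `𝔰𝔬(I)` as the skew `I × I` matrices, and for a set `S` of coordinates let `soOn S`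
be the skew matrices supported on `S × S`. The chain is `soOn S ⊂ soOn T ⊂ 𝔰𝔬(I)` with
`T \ S = {p}` and `Tᶜ = {q}`.

An involution `σ` of `I` with at most one fixed point gives a Cartan subalgebra: the skew
matrices supported on the graph of `σ`, i.e. the rotations in the planes `{i, σ i}`. It normalizes
`soOn S` when `σ` preserves `S`, and such a `σ` exists (reverse `S` and `Sᶜ` separately) as soon as
`|S|` or `|Sᶜ|` is even. This gives both regularity statements.

Conversely, bracketing with the rotations inside `S` shows that everything normalizing `soOn S`
(with `|S| ≥ 2`) is block diagonal for `I = S ⊔ Sᶜ`. A Cartan subalgebra `H` normalizing both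
`soOn T` and `soOn S` therefore lies in `soOn S`, so it commutes with the rotation in the
`{p, q}`-plane. Being self-normalizing, `H` would contain that rotation, which is not in `soOn T`.
-/

open LieAlgebra Matrix
attribute [local instance 100] LieRing.ofAssociativeRing

/-- The standard block embedding of matrix Lie algebras, `A ↦ [[A, 0], [0, 0]]`. -/
def blockEmbed (m : Type*) [Fintype m] [DecidableEq m] :
    Matrix m m ℂ →ₗ⁅ℂ⁆ Matrix (m ⊕ Fin 1) (m ⊕ Fin 1) ℂ where
  toFun A := Matrix.fromBlocks A 0 0 0
  map_add' A B := by simp [Matrix.fromBlocks_add]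
  map_smul' c A := by simp [Matrix.fromBlocks_smul]
  map_lie' {A B} := by
    simp only [Ring.lie_def, Matrix.fromBlocks_multiply, Matrix.mul_zero, Matrix.zero_mul,
      add_zero, zero_add]
    rw [sub_eq_add_neg, sub_eq_add_neg, Matrix.fromBlocks_neg, Matrix.fromBlocks_add]
    simp

theorem blockEmbed_mem_so (m : Type*) [Fintype m] [DecidableEq m]
    (A : Matrix m m ℂ) (hA : A ∈ Orthogonal.so m ℂ) :
    blockEmbed m A ∈ Orthogonal.so (m ⊕ Fin 1) ℂ := by
  rw [Orthogonal.mem_so] at hA ⊢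
  show (Matrix.fromBlocks A 0 0 0)ᵀ = -Matrix.fromBlocks A 0 0 0
  rw [Matrix.fromBlocks_transpose, hA, Matrix.fromBlocks_neg]
  simp

/-- The standard embedding 𝔰𝔬(m,ℂ) → 𝔰𝔬(m+1,ℂ). -/
def soEmbed (m : Type*) [Fintype m] [DecidableEq m] :
    ↥(Orthogonal.so m ℂ) →ₗ⁅ℂ⁆ ↥(Orthogonal.so (m ⊕ Fin 1) ℂ) where
  toFun A := ⟨blockEmbed m (A : Matrix m m ℂ), blockEmbed_mem_so m _ A.2⟩
  map_add' A B := by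
    ext : 1
    show blockEmbed m ((A : Matrix m m ℂ) + (B : Matrix m m ℂ)) = _
    exact map_add (blockEmbed m) _ _
  map_smul' c A := by
    ext : 1
    show blockEmbed m (c • (A : Matrix m m ℂ)) = _
    exact map_smul (blockEmbed m) _ _
  map_lie' {A B} := by
    ext : 1
    show blockEmbed m ⁅(A : Matrix m m ℂ), (B : Matrix m m ℂ)⁆ = _
    rw [LieHom.map_lie]; rfl

/-- A Lie subalgebra is *regular* if it is normalized by some Cartan subalgebra. -/
def LieSubalgebra.IsRegularSubalgebra {K L : Type*} [Field K] [LieRing L] [LieAlgebra K L]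
    (r : LieSubalgebra K L) : Prop :=
  ∃ H : LieSubalgebra K L, H.IsCartanSubalgebra ∧ ∀ x ∈ H, ∀ y ∈ r, ⁅x, y⁆ ∈ r

open Function Set

namespace LieAlgebra.Orthogonal

section CommRing

variable {R I : Type*} [CommRing R] [Fintype I]

section Graph

variable {σ : I → I}

lemma mul_apply_of_graph_left {A : Matrix I I R} (hA : ∀ i j, j ≠ σ i → A i j = 0)
    (B : Matrix I I R) (i j : I) : (A * B) i j = A i (σ i) * B (σ i) j := by
  rw [mul_apply, Finset.sum_eq_single (σ i) (fun k _ hk => by rw [hA i k hk, zero_mul])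
    (by simp)]

lemma mul_apply_of_graph_right (hσ : Involutive σ) (A : Matrix I I R) {B : Matrix I I R}
    (hB : ∀ i j, j ≠ σ i → B i j = 0) (i j : I) : (A * B) i j = A i (σ j) * B (σ j) j := by
  refine (mul_apply ..).trans (Finset.sum_eq_single (σ j) (fun k _ hk => ?_) (by simp))
  rw [hB k j (fun h => hk (h ▸ (hσ k).symm)), mul_zero]

end Graph

variable [DecidableEq I]

lemma apply_eq_neg_apply (x : so I R) (i j : I) :
    (x : Matrix I I R) i j = -(x : Matrix I I R) j i := by
  simpa using congr_fun₂ ((mem_so _ _ _).mp x.2) j i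

lemma apply_self_eq_zero [IsAddTorsionFree R] (x : so I R) (i : I) :
    (x : Matrix I I R) i i = 0 :=
  self_eq_neg.mp (apply_eq_neg_apply x i i)

def skewSingle (i j : I) : so I R :=
  ⟨single i j 1 - single j i 1, by
    rw [mem_so, transpose_sub, transpose_single, transpose_single, neg_sub]⟩

lemma coe_skewSingle (i j : I) :
    (skewSingle (R := R) i j : Matrix I I R) = single i j 1 - single j i 1 := rfl

def soOn (S : Set I) : LieSubalgebra R (so I R) where
  carrier := {x | ∀ i, ∀ j ∉ S, (x : Matrix I I R) i j = 0}
  zero_mem' _ _ _ := rfl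
  add_mem' hx hy i j hj := by simp [hx i j hj, hy i j hj]
  smul_mem' c x hx i j hj := by simp [hx i j hj]
  lie_mem' hx hy i j hj := by
    simp [Ring.lie_def, Matrix.mul_apply, hx _ j hj, hy _ j hj]

lemma soOn_mono {S T : Set I} (h : S ⊆ T) : soOn (R := R) S ≤ soOn T :=
  fun _ hx i j hj => hx i j (fun hjS => hj (h hjS))

lemma soOn_univ : soOn (R := R) (univ : Set I) = ⊤ :=
  eq_top_iff.mpr fun _ _ _ j hj => absurd (mem_univ j) hj

lemma skewSingle_mem_soOn {S : Set I} {i j : I} (hi : i ∈ S) (hj : j ∈ S) :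
    skewSingle (R := R) i j ∈ soOn S := by
  intro a b hb
  have hbi : b ≠ i := fun h => hb (h ▸ hi)
  have hbj : b ≠ j := fun h => hb (h ▸ hj)
  simp [coe_skewSingle, hbi.symm, hbj.symm]

lemma apply_eq_zero_of_mem_normalizer_soOn {S : Set I} {x : so I R}
    (hx : x ∈ (soOn S).normalizer) {k k' j : I} (hk : k ∈ S) (hk' : k' ∈ S) (hkk' : k' ≠ k)
    (hj : j ∉ S) : (x : Matrix I I R) k j = 0 := by
  have hjk : j ≠ k := fun h => hj (h ▸ hk)
  have hjk' : j ≠ k' := fun h => hj (h ▸ hk')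
  have h := (LieSubalgebra.mem_normalizer_iff _ x).mp hx _ (skewSingle_mem_soOn hk hk') k' j hj
  simpa [Ring.lie_def, coe_skewSingle, mul_sub, sub_mul, mul_single_apply_of_ne, hjk, hjk',
    single_mul_apply_of_ne, hkk'] using h

lemma mem_soOn_of_mem_normalizer {S : Set I} (hS : S.Nontrivial) {x : so I R}
    (hx : x ∈ (soOn S).normalizer) (hSc : ∀ i ∉ S, ∀ j ∉ S, (x : Matrix I I R) i j = 0) :
    x ∈ soOn S := by
  intro i j hj
  by_cases hi : i ∈ S
  · obtain ⟨k', hk', hk'i⟩ := hS.exists_ne i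
    exact apply_eq_zero_of_mem_normalizer_soOn hx hi hk' hk'i hj
  · exact hSc i hi j hj

lemma lie_skewSingle_eq_zero_of_mem_soOn {S : Set I} {p q : I} (hp : p ∉ S) (hq : q ∉ S)
    {x : so I R} (hx : x ∈ soOn S) : ⁅skewSingle (R := R) p q, x⁆ = 0 := by
  have hrow : ∀ i ∉ S, ∀ j, (x : Matrix I I R) i j = 0 := fun i hi j => by
    rw [apply_eq_neg_apply, hx j i hi, neg_zero]
  ext a b
  simp [Ring.lie_def, coe_skewSingle, sub_mul, mul_sub, Matrix.mul_apply, single_apply, ite_and,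
    Finset.sum_ite_irrel, hrow p hp, hrow q hq, hx _ p hp, hx _ q hq]

section Pairing

variable {σ : I → I}

lemma lie_eq_zero_of_graph (hσ : Involutive σ) {x y : so I R}
    (hx : ∀ i j, j ≠ σ i → (x : Matrix I I R) i j = 0)
    (hy : ∀ i j, j ≠ σ i → (y : Matrix I I R) i j = 0) : ⁅x, y⁆ = 0 := by
  ext i j
  rcases eq_or_ne j i with rfl | hji
  · simp [Ring.lie_def, mul_apply_of_graph_left hx, mul_apply_of_graph_left hy,
      apply_eq_neg_apply x (σ j) j, apply_eq_neg_apply y (σ j) j, mul_comm]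
  · have hσj : j ≠ σ (σ i) := by rwa [hσ i]
    simp [Ring.lie_def, mul_apply_of_graph_left hx, mul_apply_of_graph_left hy,
      hx _ j hσj, hy _ j hσj]

def pairingCartan (σ : I → I) (hσ : Involutive σ) : LieSubalgebra R (so I R) where
  carrier := {x | ∀ i j, j ≠ σ i → (x : Matrix I I R) i j = 0}
  zero_mem' _ _ _ := rfl
  add_mem' hx hy i j hj := by simp [hx i j hj, hy i j hj]
  smul_mem' c x hx i j hj := by simp [hx i j hj]
  lie_mem' hx hy := by
    rw [lie_eq_zero_of_graph hσ hx hy]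
    exact fun _ _ _ => rfl

variable {hσ : Involutive σ}

lemma skewSingle_mem_pairingCartan (i : I) :
    skewSingle (R := R) i (σ i) ∈ pairingCartan σ hσ := by
  intro a b hb
  have h₁ : ¬(i = a ∧ σ i = b) := by rintro ⟨rfl, rfl⟩; exact hb rfl
  have h₂ : ¬(σ i = a ∧ i = b) := by rintro ⟨rfl, rfl⟩; exact hb (hσ i).symm
  simp [coe_skewSingle, h₁, h₂]

lemma apply_eq_zero_of_mem_normalizer_pairingCartan {x : so I R}
    (hx : x ∈ (pairingCartan σ hσ).normalizer) {i c : I} (hi : σ i ≠ i) (hci : c ≠ i)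
    (hcσi : c ≠ σ i) : (x : Matrix I I R) c i = 0 := by
  have h := (LieSubalgebra.mem_normalizer_iff _ x).mp hx _ (skewSingle_mem_pairingCartan i) c
    (σ i) (hσ.injective.ne hci).symm
  simpa [Ring.lie_def, coe_skewSingle, mul_sub, sub_mul, mul_single_apply_of_ne _ _ _ _ _ hi,
    single_mul_apply_of_ne _ _ _ _ _ hci, single_mul_apply_of_ne _ _ _ _ _ hcσi] using h

theorem isCartanSubalgebra_pairingCartan [IsAddTorsionFree R]
    (hfix : (fixedPoints σ).Subsingleton) :
    (pairingCartan (R := R) σ hσ).IsCartanSubalgebra where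
  nilpotent :=
    have : IsLieAbelian (pairingCartan (R := R) σ hσ) :=
      ⟨fun x y => Subtype.ext (lie_eq_zero_of_graph hσ x.2 y.2)⟩
    inferInstance
  self_normalizing := by
    refine le_antisymm (fun x hx c j hj => ?_) (LieSubalgebra.le_normalizer _)
    rcases eq_or_ne j c with rfl | hjc
    · exact apply_self_eq_zero x j
    by_cases hσj : σ j = j
    · have hσc : σ c ≠ c := fun hσc => hjc (hfix hσj hσc)
      rw [apply_eq_neg_apply, apply_eq_zero_of_mem_normalizer_pairingCartan hx hσc hjc hj,
        neg_zero]
    · exact apply_eq_zero_of_mem_normalizer_pairingCartan hx hσj hjc.symm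
        (fun h => hj (h ▸ (hσ j).symm))

lemma pairingCartan_le_normalizer_soOn {S : Set I} (hS : ∀ j ∉ S, σ j ∉ S) :
    pairingCartan σ hσ ≤ (soOn (R := R) S).normalizer := by
  intro h hh
  rw [LieSubalgebra.mem_normalizer_iff]
  intro y hy i j hj
  simp [Ring.lie_def, mul_apply_of_graph_left hh, mul_apply_of_graph_right hσ _ hh, hy _ j hj,
    hy _ _ (hS j hj)]

end Pairing

lemma fixedPoints_sumMap_rev_subsingleton {a b : ℕ} (h : Even a ∨ Even b) :
    (fixedPoints (Sum.map (Fin.rev (n := a)) (Fin.rev (n := b)))).Subsingleton := by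
  rintro (i | i) hi (j | j) hj <;>
    simp only [mem_fixedPoints, IsFixedPt, Sum.map_inl, Sum.map_inr, Sum.inl.injEq,
      Sum.inr.injEq, reduceCtorEq, Fin.ext_iff, Fin.val_rev] at hi hj ⊢ <;>
    rcases h with ⟨k, hk⟩ | ⟨k, hk⟩ <;> omega

theorem not_exists_isCartanSubalgebra_normalizing_soOn [Nontrivial R] [IsAddTorsionFree R]
    {S T : Set I} {p q : I} (hST : S ⊆ T) (hS : S.Nontrivial) (hTS : T \ S = {p})
    (hTc : Tᶜ = {q}) :
    ¬ ∃ H : LieSubalgebra R (so I R), H.IsCartanSubalgebra ∧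
      (∀ x ∈ H, ∀ y ∈ soOn S, ⁅x, y⁆ ∈ soOn (R := R) S) ∧
      (∀ x ∈ H, ∀ y ∈ soOn T, ⁅x, y⁆ ∈ soOn (R := R) T) := by
  rintro ⟨H, hH, hHS, hHT⟩
  have hpS : p ∉ S := ((eq_singleton_iff_unique_mem.mp hTS).1).2
  have hqT : q ∉ T := (eq_singleton_iff_unique_mem.mp hTc).1
  have hT : H ≤ soOn T := fun x hx =>
    mem_soOn_of_mem_normalizer (hS.mono hST) ((LieSubalgebra.mem_normalizer_iff _ x).mpr
      (hHT x hx)) fun i hi j hj => by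
        rw [← mem_compl_iff, hTc] at hi hj
        rw [hi, hj]
        exact apply_self_eq_zero x q
  have hS' : H ≤ soOn S := fun x hx =>
    mem_soOn_of_mem_normalizer hS ((LieSubalgebra.mem_normalizer_iff _ x).mpr
      (hHS x hx)) fun i hi j hj => by
        by_cases hjT : j ∈ T
        · by_cases hiT : i ∈ T
          · have hi' : i ∈ T \ S := ⟨hiT, hi⟩
            have hj' : j ∈ T \ S := ⟨hjT, hj⟩
            rw [hTS] at hi' hj'
            rw [hi', hj']
            exact apply_self_eq_zero x p
          · rw [apply_eq_neg_apply, hT hx j i hiT, neg_zero]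
        · exact hT hx i j hjT
  have hE : skewSingle (R := R) p q ∈ H := by
    rw [← hH.self_normalizing, LieSubalgebra.mem_normalizer_iff]
    intro x hx
    rw [lie_skewSingle_eq_zero_of_mem_soOn hpS (fun h => hqT (hST h)) (hS' hx)]
    exact H.zero_mem
  have hpq : p ≠ q := fun h => hqT (h ▸ ((eq_singleton_iff_unique_mem.mp hTS).1).1)
  simpa [coe_skewSingle, hpq] using hT hE p q hqT

end CommRing

theorem isRegularSubalgebra_soOn {K I : Type*} [Field K] [IsAddTorsionFree K] [Fintype I]
    [DecidableEq I] (S : Set I) (hS : Even (Nat.card S) ∨ Even (Nat.card ↥Sᶜ)) :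
    (soOn (R := K) S).IsRegularSubalgebra := by
  classical
  let e : I ≃ Fin (Nat.card S) ⊕ Fin (Nat.card ↥Sᶜ) :=
    (Equiv.Set.sumCompl S).symm.trans (Equiv.sumCongr (Finite.equivFin _) (Finite.equivFin _))
  let σ : I → I := e.symm ∘ Sum.map Fin.rev Fin.rev ∘ e
  have hσ : Involutive σ := fun i => by
    simp only [σ, Function.comp_apply, Equiv.apply_symm_apply, Sum.map_map,
      Fin.rev_involutive.comp_self, Sum.map_id_id, id_eq, Equiv.symm_apply_apply]
  have hfix : (fixedPoints σ).Subsingleton := fun i hi j hj => e.injective <|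
    fixedPoints_sumMap_rev_subsingleton hS (e.symm_apply_eq.mp hi) (e.symm_apply_eq.mp hj)
  have hσS : ∀ j ∉ S, σ j ∉ S := fun j hj => by
    simp only [σ, e, Function.comp_apply, Equiv.trans_apply, Equiv.sumCongr_apply, Sum.map_inr,
      Equiv.Set.sumCompl_symm_apply_of_notMem hj, Equiv.symm_trans_apply, Equiv.sumCongr_symm,
      Equiv.symm_symm, Equiv.Set.sumCompl_apply_inr]
    exact ((Finite.equivFin ↥Sᶜ).symm _).prop
  exact ⟨pairingCartan σ hσ, isCartanSubalgebra_pairingCartan hfix, fun x hx =>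
    (LieSubalgebra.mem_normalizer_iff _ x).mp (pairingCartan_le_normalizer_soOn hσS hx)⟩

section soEmbed

variable {m : Type*} [Fintype m] [DecidableEq m]

lemma map_soEmbed_soOn (S : Set m) :
    (soOn S).map (soEmbed m) = soOn (Sum.inl '' S) := by
  ext x
  rw [LieSubalgebra.mem_map]
  constructor
  · rintro ⟨y, hy, rfl⟩ i (j | j) hj
    · have hj' : j ∉ S := fun h => hj (mem_image_of_mem _ h)
      rcases i with i | i <;> simp [soEmbed, blockEmbed, hy _ j hj']
    · rcases i with i | i <;> simp [soEmbed, blockEmbed]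
  · intro hx
    have hrow : ∀ i ∉ Sum.inl '' S, ∀ j, (x : Matrix (m ⊕ Fin 1) (m ⊕ Fin 1) ℂ) i j = 0 :=
      fun i hi j => by rw [apply_eq_neg_apply, hx j i hi, neg_zero]
    refine ⟨⟨(x : Matrix (m ⊕ Fin 1) (m ⊕ Fin 1) ℂ).toBlocks₁₁, ?_⟩, ?_, Subtype.ext ?_⟩
    · rw [mem_so]
      ext k l
      exact apply_eq_neg_apply x (Sum.inl l) (Sum.inl k)
    · intro k l hl
      exact hx (Sum.inl k) (Sum.inl l) (by simpa using hl)
    · change fromBlocks _ 0 0 0 = _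
      conv_rhs => rw [← fromBlocks_toBlocks (x : Matrix (m ⊕ Fin 1) (m ⊕ Fin 1) ℂ)]
      congr 1 <;> ext i j
      · exact (hx _ _ (by simp)).symm
      · exact (hrow _ (by simp) _).symm
      · exact (hrow _ (by simp) _).symm

lemma range_soEmbed : (soEmbed m).range = soOn (range Sum.inl) := by
  rw [LieHom.range_eq_map, ← soOn_univ, map_soEmbed_soOn, image_univ]

lemma range_soEmbed_comp_soEmbed :
    ((soEmbed (m ⊕ Fin 1)).comp (soEmbed m)).range = soOn (Sum.inl '' range Sum.inl) := by
  rw [← map_soEmbed_soOn, ← range_soEmbed]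
  ext x
  rw [LieSubalgebra.mem_map]
  constructor
  · rintro ⟨y, rfl⟩
    exact ⟨soEmbed m y, ⟨y, rfl⟩, rfl⟩
  · rintro ⟨_, ⟨y, rfl⟩, rfl⟩
    exact ⟨y, rfl⟩

end soEmbed

end LieAlgebra.Orthogonal

theorem soOdd_chain_regular_but_no_common_cartan (n : ℕ) (hn : 2 ≤ n) :
    -- the standard copy of 𝔰𝔬(2n−1,ℂ) inside 𝔰𝔬(2n+1,ℂ):
    letI a : LieSubalgebra ℂ ↥(Orthogonal.so ((Fin (2 * n - 1) ⊕ Fin 1) ⊕ Fin 1) ℂ) :=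
      ((soEmbed (Fin (2 * n - 1) ⊕ Fin 1)).comp (soEmbed (Fin (2 * n - 1)))).range
    -- the standard copy of 𝔰𝔬(2n,ℂ) inside 𝔰𝔬(2n+1,ℂ):
    letI b : LieSubalgebra ℂ ↥(Orthogonal.so ((Fin (2 * n - 1) ⊕ Fin 1) ⊕ Fin 1) ℂ) :=
      (soEmbed (Fin (2 * n - 1) ⊕ Fin 1)).range
    a ≤ b ∧
    a.IsRegularSubalgebra ∧
    b.IsRegularSubalgebra ∧
    ¬ ∃ H : LieSubalgebra ℂ ↥(Orthogonal.so ((Fin (2 * n - 1) ⊕ Fin 1) ⊕ Fin 1) ℂ),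
        H.IsCartanSubalgebra ∧
        (∀ x ∈ H, ∀ y ∈ a, ⁅x, y⁆ ∈ a) ∧
        (∀ x ∈ H, ∀ y ∈ b, ⁅x, y⁆ ∈ b) := by
  rw [Orthogonal.range_soEmbed_comp_soEmbed, Orthogonal.range_soEmbed]
  set S : Set ((Fin (2 * n - 1) ⊕ Fin 1) ⊕ Fin 1) := Sum.inl '' range Sum.inl
  have hST : S ⊆ range Sum.inl := image_subset_range _ _
  have hSc : Sᶜ = {Sum.inl (Sum.inr 0), Sum.inr 0} := by
    ext ((k | u) | u) <;> simp [S, Fin.fin_one_eq_zero]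
  refine ⟨Orthogonal.soOn_mono hST, Orthogonal.isRegularSubalgebra_soOn S (Or.inr ?_),
    Orthogonal.isRegularSubalgebra_soOn _ (Or.inl ?_),
    Orthogonal.not_exists_isCartanSubalgebra_normalizing_soOn
      (p := Sum.inl (Sum.inr 0)) (q := Sum.inr 0) hST ?_ ?_ ?_⟩
  · rw [hSc, Nat.card_coe_set_eq, ncard_pair (by simp)]
    exact even_two
  · rw [Nat.card_range_of_injective Sum.inl_injective, Nat.card_sum, Nat.card_fin, Nat.card_fin]
    exact ⟨n, by omega⟩
  · exact ⟨Sum.inl (Sum.inl ⟨0, by omega⟩), by simp [S], Sum.inl (Sum.inl ⟨1, by omega⟩),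
      by simp [S], by simp⟩
  · ext ((k | u) | u) <;> simp [S, Fin.fin_one_eq_zero]
  · ext ((k | u) | u) <;> simp [Fin.fin_one_eq_zero]
end

section
/- Let ε : 𝔤ᶜ → 𝔤̃ᶜ be an injective homomorphism of complex semisimple Lie algebras, 𝔤 a real form of 𝔤ᶜ with conjugation σ, 𝔲 a compact form of 𝔤ᶜ with conjugation τ satisfying στ = τσ, and θ = στ. Suppose 𝔲̃ is a compact form of 𝔤̃ᶜ with conjugation τ̃ and θ̃ is a ℂ-linear involution of 𝔤̃ᶜ such that ε(𝔲) ⊆ 𝔲̃, ε∘θ = θ̃∘ε, and θ̃∘τ̃ = τ̃∘θ̃. Then θ̃ leaves 𝔲̃ invariant, and setting 𝔨̃ = 𝔲̃₁ and 𝔭̃ = i·𝔲̃₋₁ (where 𝔲̃_k is the k-eigenspace of θ̃ on 𝔲̃), the real subspace 𝔤̃ = 𝔨̃ ⊕ 𝔭̃ is a real form of 𝔤̃ᶜ with ε(𝔤) ⊆ 𝔤̃. -/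
/-!
STATEMENT 16: Let ε : 𝔤ᶜ → 𝔤̃ᶜ be an injective homomorphism of complex semisimple Lie
algebras, 𝔤 a real form of 𝔤ᶜ with conjugation σ, 𝔲 a compact form with conjugation τ,
στ = τσ, θ = στ.  Suppose 𝔲̃ is a compact form of 𝔤̃ᶜ with conjugation τ̃ and θ̃ is a ℂ-linear
involution of 𝔤̃ᶜ with ε(𝔲) ⊆ 𝔲̃, ε∘θ = θ̃∘ε and θ̃∘τ̃ = τ̃∘θ̃.  Then θ̃ leaves 𝔲̃ invariant and,
setting 𝔨̃ = 𝔲̃₁, 𝔭̃ = i·𝔲̃₋₁, the real subspace 𝔤̃ = 𝔨̃ ⊕ 𝔭̃ is a real form of 𝔤̃ᶜ with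
ε(𝔤) ⊆ 𝔤̃.
-/

/-- An anti-involution (conjugation) of a complex Lie algebra; its fixed points form a
real form. -/
structure IsConjugation {L : Type*} [LieRing L] [LieAlgebra ℂ L] (σ : L → L) : Prop where
  map_add : ∀ x y, σ (x + y) = σ x + σ y
  map_smul : ∀ (c : ℂ) (x), σ (c • x) = (starRingEnd ℂ) c • σ x
  map_lie : ∀ x y, σ ⁅x, y⁆ = ⁅σ x, σ y⁆
  invol : ∀ x, σ (σ x) = x

/-- A conjugation is *compact* if the Killing form is negative definite on its fixed-point
real form. -/
def IsCompactConjugation {L : Type*} [LieRing L] [LieAlgebra ℂ L] (τ : L → L) : Prop :=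
  IsConjugation τ ∧ ∀ x, τ x = x → x ≠ 0 →
    (killingForm ℂ L x x).re < 0 ∧ (killingForm ℂ L x x).im = 0

/-!
The real form `𝔤̃` is the fixed set of the conjugation `θ̃τ̃`. Splitting `z` into its real and
imaginary parts with respect to `𝔲̃`, `z = (z + τ̃z)/2 + i·(z - τ̃z)/(2i)`, exhibits that fixed set
as `𝔨̃ ⊕ i𝔭̃`. The same splitting in `𝔤ᶜ`, where `σ = θτ`, writes every `x ∈ 𝔤` as `k + i p` with
`k ∈ 𝔲₁`, `p ∈ 𝔲₋₁`, and `ε` carries `k` into `𝔨̃` and `p` into `𝔲̃₋₁`.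
-/

open Complex

namespace IsConjugation

variable {L : Type*} [LieRing L] [LieAlgebra ℂ L] {τ : L → L}

def toSemilinearMap (hτ : IsConjugation τ) : L →ₗ⋆[ℂ] L where
  toFun := τ
  map_add' := hτ.map_add
  map_smul' := hτ.map_smul

lemma map_sub (hτ : IsConjugation τ) (x y : L) : τ (x - y) = τ x - τ y :=
  hτ.toSemilinearMap.map_sub x y

noncomputable def rePart (τ : L → L) (z : L) : L := (2⁻¹ : ℂ) • (z + τ z)

noncomputable def imPart (τ : L → L) (z : L) : L := (-(I / 2)) • (z - τ z)

lemma rePart_add_I_smul_imPart (z : L) : rePart τ z + I • imPart τ z = z := by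
  rw [rePart, imPart, smul_smul, show I * -(I / 2) = 2⁻¹ by field_simp; simp]
  module

lemma map_rePart (hτ : IsConjugation τ) (z : L) : τ (rePart τ z) = rePart τ z := by
  rw [rePart, hτ.map_smul, hτ.map_add, hτ.invol, add_comm, map_inv₀, map_ofNat]

lemma map_imPart (hτ : IsConjugation τ) (z : L) : τ (imPart τ z) = imPart τ z := by
  rw [imPart, hτ.map_smul, hτ.map_sub, hτ.invol, map_neg, map_div₀, conj_I, map_ofNat]
  module

lemma rePart_map_self (hτ : IsConjugation τ) (z : L) : rePart τ (τ z) = rePart τ z := by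
  rw [rePart, rePart, hτ.invol, add_comm]

lemma imPart_map_self (hτ : IsConjugation τ) (z : L) : imPart τ (τ z) = -imPart τ z := by
  rw [imPart, imPart, hτ.invol, ← smul_neg, neg_sub]

variable (θ : L →ₗ[ℂ] L)

lemma rePart_linearMap (hθτ : ∀ x, θ (τ x) = τ (θ x)) (z : L) :
    θ (rePart τ z) = rePart τ (θ z) := by
  rw [rePart, rePart, _root_.map_smul, _root_.map_add, hθτ]

lemma imPart_linearMap (hθτ : ∀ x, θ (τ x) = τ (θ x)) (z : L) :
    θ (imPart τ z) = imPart τ (θ z) := by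
  rw [imPart, imPart, _root_.map_smul, _root_.map_sub, hθτ]

lemma linearMap_comp (hτ : IsConjugation τ) (hθlie : ∀ x y, θ ⁅x, y⁆ = ⁅θ x, θ y⁆)
    (hθinv : ∀ x, θ (θ x) = x) (hθτ : ∀ x, θ (τ x) = τ (θ x)) :
    IsConjugation fun z ↦ θ (τ z) where
  map_add x y := by rw [hτ.map_add, _root_.map_add]
  map_smul c x := by rw [hτ.map_smul, _root_.map_smul]
  map_lie x y := by rw [hτ.map_lie, hθlie]
  invol x := by rw [hθτ, hθinv, hτ.invol]

theorem setOf_fixed_linearMap_comp_eq (hτ : IsConjugation τ)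
    (hθinv : ∀ x, θ (θ x) = x) (hθτ : ∀ x, θ (τ x) = τ (θ x)) :
    {z | θ (τ z) = z} =
      {z | ∃ k p, τ k = k ∧ θ k = k ∧ τ p = p ∧ θ p = -p ∧ z = k + I • p} := by
  ext z
  constructor
  · intro hz
    have hθz : θ z = τ z := by rw [← hθinv (τ z), hz]
    refine ⟨rePart τ z, imPart τ z, hτ.map_rePart z, ?_, hτ.map_imPart z, ?_,
      (rePart_add_I_smul_imPart z).symm⟩
    · rw [rePart_linearMap θ hθτ, hθz, hτ.rePart_map_self]
    · rw [imPart_linearMap θ hθτ, hθz, hτ.imPart_map_self]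
  · rintro ⟨k, p, hτk, hθk, hτp, hθp, rfl⟩
    change θ (τ (k + I • p)) = k + I • p
    rw [hτ.map_add, hτ.map_smul, hτk, hτp, conj_I, _root_.map_add, _root_.map_smul, hθk, hθp]
    module

end IsConjugation

theorem realForm_from_compatible_involution_general
    {L L' : Type*} [LieRing L] [LieAlgebra ℂ L]
    [LieRing L'] [LieAlgebra ℂ L']
    (ε : L →ₗ⁅ℂ⁆ L')
    -- 𝔤 real form fixed by σ, 𝔲 compact form fixed by τ, στ = τσ, θ = στ:
    (σ τ : L → L) (hσ : IsConjugation σ) (hτ : IsCompactConjugation τ)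
    (hcomm : ∀ x, σ (τ x) = τ (σ x))
    -- 𝔲̃ compact form fixed by τ̃, θ̃ a ℂ-linear involution of 𝔤̃ᶜ:
    (τ' : L' → L') (hτ' : IsCompactConjugation τ')
    (θ' : L' →ₗ[ℂ] L') (hθ'lie : ∀ x y : L', θ' ⁅x, y⁆ = ⁅θ' x, θ' y⁆)
    (hθ'inv : ∀ x, θ' (θ' x) = x)
    -- (1) ε(𝔲) ⊆ 𝔲̃;  (2) ε∘θ = θ̃∘ε;  (3) θ̃∘τ̃ = τ̃∘θ̃:
    (h1 : ∀ x, τ x = x → τ' (ε x) = ε x)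
    (h2 : ∀ x, ε (σ (τ x)) = θ' (ε x))
    (h3 : ∀ x, θ' (τ' x) = τ' (θ' x)) :
    -- θ̃ leaves 𝔲̃ invariant:
    (∀ x, τ' x = x → τ' (θ' x) = θ' x) ∧
    -- 𝔤̃ := 𝔨̃ ⊕ 𝔭̃ = 𝔲̃₁ ⊕ i·𝔲̃₋₁ is a real form of 𝔤̃ᶜ containing ε(𝔤):
    (∃ σ' : L' → L', IsConjugation σ' ∧
      {z : L' | σ' z = z} =
        {z : L' | ∃ k p : L', τ' k = k ∧ θ' k = k ∧ τ' p = p ∧ θ' p = -p ∧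
          z = k + Complex.I • p} ∧
      ∀ x, σ x = x → ∃ k p : L', τ' k = k ∧ θ' k = k ∧ τ' p = p ∧ θ' p = -p ∧
        ε x = k + Complex.I • p) := by
  obtain ⟨hτ, -⟩ := hτ
  obtain ⟨hτ', -⟩ := hτ'
  refine ⟨fun x hx ↦ by rw [← h3, hx], fun z ↦ θ' (τ' z),
    hτ'.linearMap_comp θ' hθ'lie hθ'inv h3,
    hτ'.setOf_fixed_linearMap_comp_eq θ' hθ'inv h3, fun x hx ↦ ?_⟩
  let θ : L →ₗ[ℂ] L := hσ.toSemilinearMap.comp hτ.toSemilinearMap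
  have hθ : ∀ x, θ x = σ (τ x) := fun _ ↦ rfl
  have hθinv : ∀ x, θ (θ x) = x := fun x ↦ by
    rw [hθ, hθ, hcomm (σ (τ x)), hσ.invol, hτ.invol]
  have hθτ : ∀ x, θ (τ x) = τ (θ x) := fun x ↦ by rw [hθ, hθ, hcomm]
  obtain ⟨k, p, hτk, hθk, hτp, hθp, rfl⟩ := (hτ.setOf_fixed_linearMap_comp_eq θ hθinv hθτ).subset
    (show θ (τ x) = x by rw [hθ, hτ.invol, hx])
  refine ⟨ε k, ε p, h1 k hτk, ?_, h1 p hτp, ?_, by rw [map_add, map_smul]⟩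
  · rw [← h2, ← hθ, hθk]
  · rw [← h2, ← hθ, hθp, map_neg]

theorem realForm_from_compatible_involution
    {L L' : Type*} [LieRing L] [LieAlgebra ℂ L] [FiniteDimensional ℂ L]
    [LieAlgebra.IsSemisimple ℂ L]
    [LieRing L'] [LieAlgebra ℂ L'] [FiniteDimensional ℂ L'] [LieAlgebra.IsSemisimple ℂ L']
    (ε : L →ₗ⁅ℂ⁆ L') (hε : Function.Injective ε)
    -- 𝔤 real form fixed by σ, 𝔲 compact form fixed by τ, στ = τσ, θ = στ:
    (σ τ : L → L) (hσ : IsConjugation σ) (hτ : IsCompactConjugation τ)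
    (hcomm : ∀ x, σ (τ x) = τ (σ x))
    -- 𝔲̃ compact form fixed by τ̃, θ̃ a ℂ-linear involution of 𝔤̃ᶜ:
    (τ' : L' → L') (hτ' : IsCompactConjugation τ')
    (θ' : L' →ₗ[ℂ] L') (hθ'lie : ∀ x y : L', θ' ⁅x, y⁆ = ⁅θ' x, θ' y⁆)
    (hθ'inv : ∀ x, θ' (θ' x) = x)
    -- (1) ε(𝔲) ⊆ 𝔲̃;  (2) ε∘θ = θ̃∘ε;  (3) θ̃∘τ̃ = τ̃∘θ̃:
    (h1 : ∀ x, τ x = x → τ' (ε x) = ε x)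
    (h2 : ∀ x, ε (σ (τ x)) = θ' (ε x))
    (h3 : ∀ x, θ' (τ' x) = τ' (θ' x)) :
    -- θ̃ leaves 𝔲̃ invariant:
    (∀ x, τ' x = x → τ' (θ' x) = θ' x) ∧
    -- 𝔤̃ := 𝔨̃ ⊕ 𝔭̃ = 𝔲̃₁ ⊕ i·𝔲̃₋₁ is a real form of 𝔤̃ᶜ containing ε(𝔤):
    (∃ σ' : L' → L', IsConjugation σ' ∧
      {z : L' | σ' z = z} =
        {z : L' | ∃ k p : L', τ' k = k ∧ θ' k = k ∧ τ' p = p ∧ θ' p = -p ∧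
          z = k + Complex.I • p} ∧
      ∀ x, σ x = x → ∃ k p : L', τ' k = k ∧ θ' k = k ∧ τ' p = p ∧ θ' p = -p ∧
        ε x = k + Complex.I • p) :=
  realForm_from_compatible_involution_general ε σ τ hσ hτ hcomm τ' hτ' θ' hθ'lie hθ'inv h1 h2 h3
end
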